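/- arXiv:2211.09759 — 3 statements merged into one kernel-verified Lean document; each statement's English description precedes it below -/
import Mathlib

section
/- For all smooth functions χ¹, χ², ρ¹, ρ² : ℝ → ℝ, the Lie brackets satisfy [Pˣ(χ¹), Pˣ(χ²)] = −Rˣ(χ¹·(χ²)' − (χ¹)'·χ²) and [Pʸ(ρ¹), Pʸ(ρ²)] = −Rʸ(ρ¹·(ρ²)' − (ρ¹)'·ρ²), as equalities of maps ℝ⁴ → ℝ⁴. -/
/-- The Lie bracket of two vector fields on `ℝ⁴`, `[X,Y](p) = DY(p)(X(p)) − DX(p)(Y(p))`. -/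
noncomputable def lieBracket (X Y : ℝ × ℝ × ℝ × ℝ → ℝ × ℝ × ℝ × ℝ) :
    ℝ × ℝ × ℝ × ℝ → ℝ × ℝ × ℝ × ℝ :=
  fun p => fderiv ℝ Y p (X p) - fderiv ℝ X p (Y p)

/-- `Dᵗ(τ)(t,x,y,u) = (τ(t), τ'(t)x/3, τ'(t)y/3, −τ''(t)(x³+y³)/18)`. -/
noncomputable def Dt (τ : ℝ → ℝ) : ℝ × ℝ × ℝ × ℝ → ℝ × ℝ × ℝ × ℝ :=
  fun p => (τ p.1, deriv τ p.1 * p.2.1 / 3, deriv τ p.1 * p.2.2.1 / 3,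
    -deriv (deriv τ) p.1 * (p.2.1 ^ 3 + p.2.2.1 ^ 3) / 18)

/-- `Dˢ(t,x,y,u) = (0, x, y, 3u)`. -/
noncomputable def Ds : ℝ × ℝ × ℝ × ℝ → ℝ × ℝ × ℝ × ℝ :=
  fun p => (0, p.2.1, p.2.2.1, 3 * p.2.2.2)

/-- `Pˣ(χ)(t,x,y,u) = (0, χ(t), 0, −χ'(t)x²/2)`. -/
noncomputable def Px (χ : ℝ → ℝ) : ℝ × ℝ × ℝ × ℝ → ℝ × ℝ × ℝ × ℝ :=
  fun p => (0, χ p.1, 0, -deriv χ p.1 * p.2.1 ^ 2 / 2)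

/-- `Pʸ(ρ)(t,x,y,u) = (0, 0, ρ(t), −ρ'(t)y²/2)`. -/
noncomputable def Py (ρ : ℝ → ℝ) : ℝ × ℝ × ℝ × ℝ → ℝ × ℝ × ℝ × ℝ :=
  fun p => (0, 0, ρ p.1, -deriv ρ p.1 * p.2.2.1 ^ 2 / 2)

/-- `Rˣ(α)(t,x,y,u) = (0,0,0, α(t)x)`. -/
noncomputable def Rx (α : ℝ → ℝ) : ℝ × ℝ × ℝ × ℝ → ℝ × ℝ × ℝ × ℝ :=
  fun p => (0, 0, 0, α p.1 * p.2.1)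

/-- `Rʸ(β)(t,x,y,u) = (0,0,0, β(t)y)`. -/
noncomputable def Ry (β : ℝ → ℝ) : ℝ × ℝ × ℝ × ℝ → ℝ × ℝ × ℝ × ℝ :=
  fun p => (0, 0, 0, β p.1 * p.2.2.1)

/-- `Z(σ)(t,x,y,u) = (0,0,0, σ(t))`. -/
noncomputable def Zf (σ : ℝ → ℝ) : ℝ × ℝ × ℝ × ℝ → ℝ × ℝ × ℝ × ℝ :=
  fun p => (0, 0, 0, σ p.1)


lemma fderiv_Px_apply (χ : ℝ → ℝ) (hχ : ContDiff ℝ (⊤ : ℕ∞) χ) (p v : ℝ × ℝ × ℝ × ℝ)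
    (hv : v.1 = 0) :
    fderiv ℝ (Px χ) p v = (0, 0, 0, -(deriv χ p.1 * p.2.1 * v.2.1)) := by
  set fst1 : (ℝ × ℝ × ℝ × ℝ) →L[ℝ] ℝ := ContinuousLinearMap.fst ℝ ℝ _ with hfst1
  set X' : (ℝ × ℝ × ℝ × ℝ) →L[ℝ] ℝ :=
    (ContinuousLinearMap.fst ℝ ℝ (ℝ × ℝ)).comp (ContinuousLinearMap.snd ℝ ℝ (ℝ × ℝ × ℝ)) with hX'
  have hχd : Differentiable ℝ χ := hχ.differentiable (by simp)
  have hchi2 : ContDiff ℝ ((⊤ : ℕ∞) : WithTop ℕ∞) χ := hχ.of_le (by simp)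
  have hdχ : Differentiable ℝ (deriv χ) := by
    have h := (contDiff_infty_iff_deriv.mp hchi2).2
    exact h.differentiable (by simp)
  have h1 : HasFDerivAt (fun _ : ℝ × ℝ × ℝ × ℝ => (0:ℝ)) (0 : (ℝ × ℝ × ℝ × ℝ) →L[ℝ] ℝ) p := hasFDerivAt_const (0:ℝ) p
  have h2 : HasFDerivAt (fun q : ℝ × ℝ × ℝ × ℝ => χ q.1) (deriv χ p.1 • fst1) p :=
    (hχd p.1).hasDerivAt.comp_hasFDerivAt p (hasFDerivAt_fst)
  have hc : HasFDerivAt (fun q : ℝ × ℝ × ℝ × ℝ => -deriv χ q.1)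
      (-(deriv (deriv χ) p.1 • fst1)) p :=
    ((hdχ p.1).hasDerivAt.comp_hasFDerivAt p hasFDerivAt_fst).neg
  have hX : HasFDerivAt (fun q : ℝ × ℝ × ℝ × ℝ => q.2.1) X' p :=
    hasFDerivAt_fst.comp p hasFDerivAt_snd
  have hd : HasFDerivAt (fun q : ℝ × ℝ × ℝ × ℝ => q.2.1 ^ 2 / 2)
      (((2 : ℕ) * p.2.1 ^ 1 / 2) • X') p :=
    ((hasDerivAt_pow 2 p.2.1).div_const 2).comp_hasFDerivAt (h₂ := fun x => x ^ 2 / 2) p hX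
  have h4 : HasFDerivAt (fun q : ℝ × ℝ × ℝ × ℝ => -deriv χ q.1 * (q.2.1 ^ 2 / 2))
      ((-deriv χ p.1) • (((2 : ℕ) * p.2.1 ^ 1 / 2) • X')
        + (p.2.1 ^ 2 / 2) • (-(deriv (deriv χ) p.1 • fst1))) p := hc.mul hd
  have hPx : Px χ = fun q : ℝ × ℝ × ℝ × ℝ =>
      ((fun _ : ℝ × ℝ × ℝ × ℝ => (0:ℝ)) q, (fun q : ℝ × ℝ × ℝ × ℝ => χ q.1) q,
        (fun _ : ℝ × ℝ × ℝ × ℝ => (0:ℝ)) q,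
        (fun q : ℝ × ℝ × ℝ × ℝ => -deriv χ q.1 * (q.2.1 ^ 2 / 2)) q) := by
    funext q; simp only [Px, Prod.mk.injEq]; exact ⟨trivial, trivial, trivial, by ring⟩
  have hP := h1.prodMk (h2.prodMk (h1.prodMk h4))
  rw [hPx, hP.fderiv]
  simp [hv, hX', hfst1]
  ring

lemma fderiv_Py_apply (ρ : ℝ → ℝ) (hρ : ContDiff ℝ (⊤ : ℕ∞) ρ) (p v : ℝ × ℝ × ℝ × ℝ)
    (hv : v.1 = 0) :
    fderiv ℝ (Py ρ) p v = (0, 0, 0, -(deriv ρ p.1 * p.2.2.1 * v.2.2.1)) := by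
  set fst1 : (ℝ × ℝ × ℝ × ℝ) →L[ℝ] ℝ := ContinuousLinearMap.fst ℝ ℝ _ with hfst1
  set Y' : (ℝ × ℝ × ℝ × ℝ) →L[ℝ] ℝ :=
    ((ContinuousLinearMap.fst ℝ ℝ ℝ).comp (ContinuousLinearMap.snd ℝ ℝ (ℝ × ℝ))).comp
      (ContinuousLinearMap.snd ℝ ℝ (ℝ × ℝ × ℝ)) with hY'
  have hρd : Differentiable ℝ ρ := hρ.differentiable (by simp)
  have hrho2 : ContDiff ℝ ((⊤ : ℕ∞) : WithTop ℕ∞) ρ := hρ.of_le (by simp)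
  have hdρ : Differentiable ℝ (deriv ρ) := by
    have h := (contDiff_infty_iff_deriv.mp hrho2).2
    exact h.differentiable (by simp)
  have h1 : HasFDerivAt (fun _ : ℝ × ℝ × ℝ × ℝ => (0:ℝ)) (0 : (ℝ × ℝ × ℝ × ℝ) →L[ℝ] ℝ) p := hasFDerivAt_const (0:ℝ) p
  have h3 : HasFDerivAt (fun q : ℝ × ℝ × ℝ × ℝ => ρ q.1) (deriv ρ p.1 • fst1) p :=
    (hρd p.1).hasDerivAt.comp_hasFDerivAt p (hasFDerivAt_fst)
  have hc : HasFDerivAt (fun q : ℝ × ℝ × ℝ × ℝ => -deriv ρ q.1)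
      (-(deriv (deriv ρ) p.1 • fst1)) p :=
    ((hdρ p.1).hasDerivAt.comp_hasFDerivAt p hasFDerivAt_fst).neg
  have hY : HasFDerivAt (fun q : ℝ × ℝ × ℝ × ℝ => q.2.2.1) Y' p :=
    HasFDerivAt.comp p (hasFDerivAt_fst.comp p.2 hasFDerivAt_snd) hasFDerivAt_snd
  have hd : HasFDerivAt (fun q : ℝ × ℝ × ℝ × ℝ => q.2.2.1 ^ 2 / 2)
      (((2 : ℕ) * p.2.2.1 ^ 1 / 2) • Y') p :=
    ((hasDerivAt_pow 2 p.2.2.1).div_const 2).comp_hasFDerivAt (h₂ := fun x => x ^ 2 / 2) p hY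
  have h4 : HasFDerivAt (fun q : ℝ × ℝ × ℝ × ℝ => -deriv ρ q.1 * (q.2.2.1 ^ 2 / 2))
      ((-deriv ρ p.1) • (((2 : ℕ) * p.2.2.1 ^ 1 / 2) • Y')
        + (p.2.2.1 ^ 2 / 2) • (-(deriv (deriv ρ) p.1 • fst1))) p := hc.mul hd
  have hPy : Py ρ = fun q : ℝ × ℝ × ℝ × ℝ =>
      ((fun _ : ℝ × ℝ × ℝ × ℝ => (0:ℝ)) q, (fun _ : ℝ × ℝ × ℝ × ℝ => (0:ℝ)) q,
        (fun q : ℝ × ℝ × ℝ × ℝ => ρ q.1) q,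
        (fun q : ℝ × ℝ × ℝ × ℝ => -deriv ρ q.1 * (q.2.2.1 ^ 2 / 2)) q) := by
    funext q; simp only [Py, Prod.mk.injEq]; exact ⟨trivial, trivial, trivial, by ring⟩
  have hP := h1.prodMk (h1.prodMk (h3.prodMk h4))
  rw [hPy, hP.fderiv]
  simp [hv, hY', hfst1]
  ring

theorem bracket_Px_Px_Py_Py (χ1 χ2 ρ1 ρ2 : ℝ → ℝ) (hχ1 : ContDiff ℝ (⊤ : ℕ∞) χ1)
    (hχ2 : ContDiff ℝ (⊤ : ℕ∞) χ2) (hρ1 : ContDiff ℝ (⊤ : ℕ∞) ρ1) (hρ2 : ContDiff ℝ (⊤ : ℕ∞) ρ2) :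
    lieBracket (Px χ1) (Px χ2)
      = (fun p => -(Rx (fun t => χ1 t * deriv χ2 t - deriv χ1 t * χ2 t) p)) ∧
    lieBracket (Py ρ1) (Py ρ2)
      = (fun p => -(Ry (fun t => ρ1 t * deriv ρ2 t - deriv ρ1 t * ρ2 t) p)) := by
  constructor
  · funext p
    show fderiv ℝ (Px χ2) p (Px χ1 p) - fderiv ℝ (Px χ1) p (Px χ2 p) = _
    rw [fderiv_Px_apply χ2 hχ2 p _ rfl, fderiv_Px_apply χ1 hχ1 p _ rfl]
    simp [Px, Rx, Prod.ext_iff]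
    ring
  · funext p
    show fderiv ℝ (Py ρ2) p (Py ρ1 p) - fderiv ℝ (Py ρ1) p (Py ρ2 p) = _
    rw [fderiv_Py_apply ρ2 hρ2 p _ rfl, fderiv_Py_apply ρ1 hρ1 p _ rfl]
    simp [Py, Ry, Prod.ext_iff]
    ring
end

section
/- For all smooth functions χ, ρ, α, β : ℝ → ℝ, the Lie brackets satisfy [Pˣ(χ), Rˣ(α)] = Z(χ·α) and [Pʸ(ρ), Rʸ(β)] = Z(ρ·β), as equalities of maps ℝ⁴ → ℝ⁴. -/
open ContinuousLinearMap

abbrev E4' := ℝ × ℝ × ℝ × ℝ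

noncomputable def ptL : E4' →L[ℝ] ℝ := fst ℝ ℝ (ℝ × ℝ × ℝ)
noncomputable def pxL : E4' →L[ℝ] ℝ := (fst ℝ ℝ (ℝ × ℝ)).comp (snd ℝ ℝ (ℝ × ℝ × ℝ))
noncomputable def pyL : E4' →L[ℝ] ℝ :=
  ((fst ℝ ℝ ℝ).comp (snd ℝ ℝ (ℝ × ℝ))).comp (snd ℝ ℝ (ℝ × ℝ × ℝ))

lemma hasFDerivAt_fst' {f : ℝ → ℝ} (hf : Differentiable ℝ f) (p : E4') :
    HasFDerivAt (fun q : E4' => f q.1) (deriv f p.1 • ptL) p := by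
  have h := ((hf p.1).hasDerivAt).hasFDerivAt
  have := h.comp p ptL.hasFDerivAt
  refine this.congr_fderiv ?_
  ext <;> simp [ptL]

lemma hasFDerivAt_Rx (α : ℝ → ℝ) (hα : Differentiable ℝ α) (p : E4') :
    HasFDerivAt (Rx α)
      ((0 : E4' →L[ℝ] ℝ).prod ((0 : E4' →L[ℝ] ℝ).prod ((0 : E4' →L[ℝ] ℝ).prod
        (α p.1 • pxL + p.2.1 • (deriv α p.1 • ptL))))) p := by
  have hx : HasFDerivAt (fun q : E4' => q.2.1) pxL p := pxL.hasFDerivAt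
  exact HasFDerivAt.prodMk (hasFDerivAt_const (0:ℝ) p) (HasFDerivAt.prodMk (hasFDerivAt_const (0:ℝ) p)
    (HasFDerivAt.prodMk (hasFDerivAt_const (0:ℝ) p) ((hasFDerivAt_fst' hα p).mul hx)))

lemma hasFDerivAt_Ry (β : ℝ → ℝ) (hβ : Differentiable ℝ β) (p : E4') :
    HasFDerivAt (Ry β)
      ((0 : E4' →L[ℝ] ℝ).prod ((0 : E4' →L[ℝ] ℝ).prod ((0 : E4' →L[ℝ] ℝ).prod
        (β p.1 • pyL + p.2.2.1 • (deriv β p.1 • ptL))))) p := by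
  have hy : HasFDerivAt (fun q : E4' => q.2.2.1) pyL p := pyL.hasFDerivAt
  exact HasFDerivAt.prodMk (hasFDerivAt_const (0:ℝ) p) (HasFDerivAt.prodMk (hasFDerivAt_const (0:ℝ) p)
    (HasFDerivAt.prodMk (hasFDerivAt_const (0:ℝ) p) ((hasFDerivAt_fst' hβ p).mul hy)))

lemma fderiv_Px_vert (χ : ℝ → ℝ) (hχ : ContDiff ℝ (⊤ : ℕ∞) χ) (p : E4') (w : ℝ) :
    fderiv ℝ (Px χ) p (0, 0, 0, w) = 0 := by
  have hχ' : Differentiable ℝ (deriv χ) :=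
    ((contDiff_infty_iff_deriv.mp (hχ.of_le (by simp))).2).differentiable (by simp)
  have hx : HasFDerivAt (fun q : E4' => q.2.1) pxL p := pxL.hasFDerivAt
  rw [show Px χ = fun q : E4' =>
      ((0:ℝ), χ q.1, (0:ℝ), -deriv χ q.1 * (q.2.1 * q.2.1) * (1/2 : ℝ)) from
    funext fun q => by simp [Px]; ring]
  have H : HasFDerivAt (fun q : E4' =>
      ((0:ℝ), χ q.1, (0:ℝ), -deriv χ q.1 * (q.2.1 * q.2.1) * (1/2 : ℝ))) _ p :=
    HasFDerivAt.prodMk (hasFDerivAt_const (0:ℝ) p) ((hasFDerivAt_fst' (hχ.differentiable (by simp)) p).prodMk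
      (HasFDerivAt.prodMk (hasFDerivAt_const (0:ℝ) p)
        (((hasFDerivAt_fst' hχ' p).neg.mul (hx.mul hx)).mul_const (1/2 : ℝ))))
  rw [H.fderiv]
  simp [ptL, pxL]

lemma fderiv_Py_vert (ρ : ℝ → ℝ) (hρ : ContDiff ℝ (⊤ : ℕ∞) ρ) (p : E4') (w : ℝ) :
    fderiv ℝ (Py ρ) p (0, 0, 0, w) = 0 := by
  have hρ' : Differentiable ℝ (deriv ρ) :=
    ((contDiff_infty_iff_deriv.mp (hρ.of_le (by simp))).2).differentiable (by simp)
  have hy : HasFDerivAt (fun q : E4' => q.2.2.1) pyL p := pyL.hasFDerivAt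
  rw [show Py ρ = fun q : E4' =>
      ((0:ℝ), (0:ℝ), ρ q.1, -deriv ρ q.1 * (q.2.2.1 * q.2.2.1) * (1/2 : ℝ)) from
    funext fun q => by simp [Py]; ring]
  have H : HasFDerivAt (fun q : E4' =>
      ((0:ℝ), (0:ℝ), ρ q.1, -deriv ρ q.1 * (q.2.2.1 * q.2.2.1) * (1/2 : ℝ))) _ p :=
    HasFDerivAt.prodMk (hasFDerivAt_const (0:ℝ) p) (HasFDerivAt.prodMk (hasFDerivAt_const (0:ℝ) p)
      ((hasFDerivAt_fst' (hρ.differentiable (by simp)) p).prodMk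
        (((hasFDerivAt_fst' hρ' p).neg.mul (hy.mul hy)).mul_const (1/2 : ℝ))))
  rw [H.fderiv]
  simp [ptL, pyL]

theorem bracket_Px_Rx_Py_Ry (χ ρ α β : ℝ → ℝ) (hχ : ContDiff ℝ (⊤ : ℕ∞) χ) (hρ : ContDiff ℝ (⊤ : ℕ∞) ρ)
    (hα : ContDiff ℝ (⊤ : ℕ∞) α) (hβ : ContDiff ℝ (⊤ : ℕ∞) β) :
    lieBracket (Px χ) (Rx α) = Zf (fun t => χ t * α t) ∧
    lieBracket (Py ρ) (Ry β) = Zf (fun t => ρ t * β t) := by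
  constructor
  · funext p
    have h1 := (hasFDerivAt_Rx α (hα.differentiable (by simp)) p).fderiv
    have h2 : Rx α p = ((0:ℝ), (0:ℝ), (0:ℝ), α p.1 * p.2.1) := rfl
    simp only [lieBracket, h1, h2, fderiv_Px_vert χ hχ p]
    simp [Rx, Px, Zf, ptL, pxL, mul_comm]
  · funext p
    have h1 := (hasFDerivAt_Ry β (hβ.differentiable (by simp)) p).fderiv
    have h2 : Ry β p = ((0:ℝ), (0:ℝ), (0:ℝ), β p.1 * p.2.2.1) := rfl
    simp only [lieBracket, h1, h2, fderiv_Py_vert ρ hρ p]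
    simp [Ry, Py, Zf, ptL, pyL, mul_comm]
end

section
/- For every smooth function u : ℝ³ → ℝ of the variables (t,x,y), with N := u_{txy} − (u_{xx}u_{xy})_x − (u_{xy}u_{yy})_y, the following identity holds at every point of ℝ³: 2·u_{xx}·N = ∂_t(u_{xx}u_{xy}) + ∂_x(u_{yy}u_{xy}² − u_{tx}u_{xy} − u_{xx}²u_{xy}) + ∂_y(u_{tx}u_{xx} − u_{xx}³/3 − 2u_{xx}u_{xy}u_{yy} − u_{xy}³/3). In particular, the dispersionless Nizhnik equation admits the conservation-law characteristic u_{xx}. -/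
/-- Partial derivative with respect to `t` of a function on `ℝ³ = ℝ × ℝ × ℝ` with
coordinates `(t, x, y)`. -/
noncomputable def pt (u : ℝ × ℝ × ℝ → ℝ) : ℝ × ℝ × ℝ → ℝ :=
  fun p => deriv (fun s => u (s, p.2.1, p.2.2)) p.1

/-- Partial derivative with respect to `x`. -/
noncomputable def px (u : ℝ × ℝ × ℝ → ℝ) : ℝ × ℝ × ℝ → ℝ :=
  fun p => deriv (fun s => u (p.1, s, p.2.2)) p.2.1

/-- Partial derivative with respect to `y`. -/
noncomputable def py (u : ℝ × ℝ × ℝ → ℝ) : ℝ × ℝ × ℝ → ℝ :=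
  fun p => deriv (fun s => u (p.1, p.2.1, s)) p.2.2


noncomputable def D (v : ℝ × ℝ × ℝ) (f : ℝ × ℝ × ℝ → ℝ) : ℝ × ℝ × ℝ → ℝ :=
  fun p => fderiv ℝ f p v

lemma D_smooth {f : ℝ × ℝ × ℝ → ℝ} (hf : ContDiff ℝ (⊤ : ℕ∞) f) (v : ℝ × ℝ × ℝ) :
    ContDiff ℝ (⊤ : ℕ∞) (D v f) :=
  (hf.fderiv_right (by simp)).clm_apply contDiff_const

lemma hD {f : ℝ × ℝ × ℝ → ℝ} (hf : ContDiff ℝ (⊤ : ℕ∞) f) (p : ℝ × ℝ × ℝ) :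
    HasFDerivAt f (fderiv ℝ f p) p :=
  (hf.differentiable (by simp) p).hasFDerivAt

lemma D_eval {f : ℝ × ℝ × ℝ → ℝ} {f' : ℝ × ℝ × ℝ →L[ℝ] ℝ} {p : ℝ × ℝ × ℝ}
    (h : HasFDerivAt f f' p) (v : ℝ × ℝ × ℝ) : D v f p = f' v := by
  simp only [D]; rw [h.fderiv]

lemma D_comm {f : ℝ × ℝ × ℝ → ℝ} (hf : ContDiff ℝ (⊤ : ℕ∞) f) (v w : ℝ × ℝ × ℝ) :
    D v (D w f) = D w (D v f) := by
  funext p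
  have hd : ContDiff ℝ (⊤ : ℕ∞) (fderiv ℝ f) := hf.fderiv_right (by simp)
  have key : ∀ a b : ℝ × ℝ × ℝ,
      fderiv ℝ (fun q => fderiv ℝ f q a) p b = fderiv ℝ (fderiv ℝ f) p b a := by
    intro a b
    rw [fderiv_clm_apply (hd.differentiable (by simp) p) (differentiableAt_const a)]
    simp
  show fderiv ℝ (fun q => fderiv ℝ f q w) p v = fderiv ℝ (fun q => fderiv ℝ f q v) p w
  rw [key, key]
  exact second_derivative_symmetric (fun y => (hf.differentiable (by simp) y).hasFDerivAt)
    ((hd.differentiable (by simp) p).hasFDerivAt) v w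

lemma pt_eq {f : ℝ × ℝ × ℝ → ℝ} (hf : ContDiff ℝ (⊤ : ℕ∞) f) : pt f = D (1, 0, 0) f := by
  funext p
  have h1 : HasDerivAt (fun s : ℝ => ((s, p.2.1, p.2.2) : ℝ × ℝ × ℝ)) (1, 0, 0) p.1 :=
    HasDerivAt.prodMk (hasDerivAt_id p.1) (hasDerivAt_const _ _)
  have h3 := (hD hf p).comp_hasDerivAt p.1 h1
  exact h3.deriv

lemma px_eq {f : ℝ × ℝ × ℝ → ℝ} (hf : ContDiff ℝ (⊤ : ℕ∞) f) : px f = D (0, 1, 0) f := by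
  funext p
  have h1 : HasDerivAt (fun s : ℝ => ((p.1, s, p.2.2) : ℝ × ℝ × ℝ)) (0, 1, 0) p.2.1 :=
    HasDerivAt.prodMk (hasDerivAt_const _ _) (HasDerivAt.prodMk (hasDerivAt_id _) (hasDerivAt_const _ _))
  have h3 := (hD hf p).comp_hasDerivAt p.2.1 h1
  exact h3.deriv

lemma py_eq {f : ℝ × ℝ × ℝ → ℝ} (hf : ContDiff ℝ (⊤ : ℕ∞) f) : py f = D (0, 0, 1) f := by
  funext p
  have h1 : HasDerivAt (fun s : ℝ => ((p.1, p.2.1, s) : ℝ × ℝ × ℝ)) (0, 0, 1) p.2.2 :=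
    HasDerivAt.prodMk (hasDerivAt_const _ _) (HasDerivAt.prodMk (hasDerivAt_const _ _) (hasDerivAt_id _))
  have h3 := (hD hf p).comp_hasDerivAt p.2.2 h1
  exact h3.deriv

theorem characteristic_uxx_identity (u : ℝ × ℝ × ℝ → ℝ) (hu : ContDiff ℝ (⊤ : ℕ∞) u) :
    ∀ p : ℝ × ℝ × ℝ,
      2 * px (px u) p *
        (pt (px (py u)) p
          - px (fun q => px (px u) q * px (py u) q) p
          - py (fun q => px (py u) q * py (py u) q) p)
      = pt (fun q => px (px u) q * px (py u) q) p
        + px (fun q => py (py u) q * (px (py u) q) ^ 2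
            - pt (px u) q * px (py u) q - (px (px u) q) ^ 2 * px (py u) q) p
        + py (fun q => pt (px u) q * px (px u) q - (px (px u) q) ^ 3 / 3
            - 2 * (px (px u) q * px (py u) q * py (py u) q) - (px (py u) q) ^ 3 / 3) p := by
  intro p
  have hx : ContDiff ℝ (⊤ : ℕ∞) (D (0,1,0) u) := D_smooth hu _
  have hy : ContDiff ℝ (⊤ : ℕ∞) (D (0,0,1) u) := D_smooth hu _
  rw [py_eq hu, px_eq hu, px_eq hy, py_eq hy, px_eq hx, pt_eq hx]
  set a := D (0,1,0) (D (0,1,0) u) with ha_def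
  set b := D (0,1,0) (D (0,0,1) u) with hb_def
  set c := D (0,0,1) (D (0,0,1) u) with hc_def
  set d := D (1,0,0) (D (0,1,0) u) with hd_def
  have hsa : ContDiff ℝ (⊤ : ℕ∞) a := D_smooth hx _
  have hsb : ContDiff ℝ (⊤ : ℕ∞) b := D_smooth hy _
  have hsc : ContDiff ℝ (⊤ : ℕ∞) c := D_smooth hy _
  have hsd : ContDiff ℝ (⊤ : ℕ∞) (D (1,0,0) (D (0,1,0) u)) := D_smooth hx _
  rw [← hd_def] at hsd
  rw [pt_eq hsb]
  have hsq : ∀ x : ℝ, x ^ 2 = x * x := fun x => by ring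
  have hcube : ∀ x : ℝ, x ^ 3 = x * x * x := fun x => by ring
  have Ha := hD hsa p
  have Hb := hD hsb p
  have Hc := hD hsc p
  have Hd := hD hsd p
  -- pt (a*b)
  rw [pt_eq (hsa.mul hsb), px_eq (hsa.mul hsb), py_eq (hsb.mul hsc),
    px_eq (((hsc.mul (hsb.pow 2)).sub (hsd.mul hsb)).sub ((hsa.pow 2).mul hsb)),
    py_eq ((((hsd.mul hsa).sub ((hsa.pow 3).div_const 3)).sub
      (contDiff_const.mul ((hsa.mul hsb).mul hsc))).sub ((hsb.pow 3).div_const 3))]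
  have Tab : ∀ v, D v (fun q => a q * b q) p = D v a p * b p + a p * D v b p := by
    intro v
    rw [D_eval (Ha.fun_mul Hb) v]
    simp only [D, ContinuousLinearMap.add_apply, ContinuousLinearMap.smul_apply, smul_eq_mul]
    ring
  have Tbc : ∀ v, D v (fun q => b q * c q) p = D v b p * c p + b p * D v c p := by
    intro v
    rw [D_eval (Hb.fun_mul Hc) v]
    simp only [D, ContinuousLinearMap.add_apply, ContinuousLinearMap.smul_apply, smul_eq_mul]
    ring
  have T3 : ∀ v, D v (fun q => c q * b q ^ 2 - d q * b q - a q ^ 2 * b q) p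
      = D v c p * b p ^ 2 + 2 * b p * c p * D v b p
        - D v d p * b p - d p * D v b p
        - 2 * a p * D v a p * b p - a p ^ 2 * D v b p := by
    intro v
    have Hb2 : HasFDerivAt (fun q => b q ^ 2)
        (b p • fderiv ℝ b p + b p • fderiv ℝ b p) p := by
      simpa only [hsq] using Hb.fun_mul Hb
    have Ha2 : HasFDerivAt (fun q => a q ^ 2)
        (a p • fderiv ℝ a p + a p • fderiv ℝ a p) p := by
      simpa only [hsq] using Ha.fun_mul Ha
    rw [D_eval (((Hc.fun_mul Hb2).fun_sub (Hd.fun_mul Hb)).fun_sub (Ha2.fun_mul Hb)) v]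
    simp only [D, ContinuousLinearMap.add_apply, ContinuousLinearMap.sub_apply,
      ContinuousLinearMap.smul_apply, smul_eq_mul]
    ring
  have T4 : ∀ v, D v (fun q => d q * a q - a q ^ 3 / 3
        - 2 * (a q * b q * c q) - b q ^ 3 / 3) p
      = D v d p * a p + d p * D v a p - a p ^ 2 * D v a p
        - 2 * (D v a p * b p * c p + a p * D v b p * c p + a p * b p * D v c p)
        - b p ^ 2 * D v b p := by
    intro v
    have Ha3 : HasFDerivAt (fun q => a q ^ 3)
        ((a p * a p) • fderiv ℝ a p + a p • (a p • fderiv ℝ a p + a p • fderiv ℝ a p)) p := by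
      simpa only [hcube] using (Ha.fun_mul Ha).fun_mul Ha
    have Hb3 : HasFDerivAt (fun q => b q ^ 3)
        ((b p * b p) • fderiv ℝ b p + b p • (b p • fderiv ℝ b p + b p • fderiv ℝ b p)) p := by
      simpa only [hcube] using (Hb.fun_mul Hb).fun_mul Hb
    have Ha33 : HasFDerivAt (fun q => a q ^ 3 / 3)
        ((3:ℝ)⁻¹ • ((a p * a p) • fderiv ℝ a p + a p • (a p • fderiv ℝ a p + a p • fderiv ℝ a p))) p := by
      simpa only [div_eq_mul_inv] using Ha3.mul_const (3:ℝ)⁻¹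
    have Hb33 : HasFDerivAt (fun q => b q ^ 3 / 3)
        ((3:ℝ)⁻¹ • ((b p * b p) • fderiv ℝ b p + b p • (b p • fderiv ℝ b p + b p • fderiv ℝ b p))) p := by
      simpa only [div_eq_mul_inv] using Hb3.mul_const (3:ℝ)⁻¹
    rw [D_eval ((((Hd.fun_mul Ha).fun_sub Ha33).fun_sub
      (((Ha.fun_mul Hb).fun_mul Hc).const_mul 2)).fun_sub Hb33) v]
    simp only [D, ContinuousLinearMap.add_apply, ContinuousLinearMap.sub_apply,
      ContinuousLinearMap.smul_apply, smul_eq_mul, ContinuousLinearMap.coe_smul',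
      Pi.smul_apply]
    ring
  rw [Tab, Tab, Tbc, T3, T4]
  -- commutation of mixed partials
  have c2d : D (0,1,0) d = D (1,0,0) a := by
    rw [hd_def, ha_def, D_comm hx]
  have c3d : D (0,0,1) d = D (1,0,0) b := by
    rw [hd_def, hb_def, D_comm hx, D_comm hu]
  have c3a : D (0,0,1) a = D (0,1,0) b := by
    rw [ha_def, hb_def, D_comm hx, D_comm hu]
  have c3b : D (0,0,1) b = D (0,1,0) c := by
    rw [hb_def, hc_def, D_comm hy]
  rw [c2d, c3d, c3a, c3b]
  ring
end
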